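/- arXiv:1008.1661 — 3 statements merged into one kernel-verified Lean document; each statement's English description precedes it below -/
import Mathlib

section
/- Let n ≥ 2 and let L₁ = { b a^{k(n-1)} : k ≥ 0 } over the alphabet {a,b} (i.e., the language of the regular expression b(a^{n-1})*). Then L₁ is suffix-free and NSC(L₁) = n, i.e., there is an NFA with n states accepting L₁ and every NFA accepting L₁ has at least n states. -/
open Computability

/-- A nondeterministic finite automaton with a single start state and
no ε-transitions. -/
structure SNFA (α : Type) (σ : Type) where
  step : σ → α → Set σ
  start : σ
  accept : Set σ

namespace SNFA

variable {α σ : Type}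

/-- The set of states reachable from some state in `S` by one transition on `a`. -/
def stepSet (M : SNFA α σ) (S : Set σ) (a : α) : Set σ :=
  ⋃ s ∈ S, M.step s a

/-- The set of states reachable from the set `S` of states by reading the word `w`. -/
def evalFrom (M : SNFA α σ) (S : Set σ) (w : List α) : Set σ :=
  w.foldl M.stepSet S

/-- The language accepted by `M`: all words spelled out by a path
from the start state to an accepting state. -/
def accepts (M : SNFA α σ) : Language α :=
  {w | ∃ q ∈ M.accept, q ∈ M.evalFrom {M.start} w}

end SNFA

/-- A language is suffix-free if no word of the language is a proper suffix
of another word of the language. -/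
def SuffixFree {α : Type} (L : Language α) : Prop :=
  ∀ u v : List α, u ∈ L → v ∈ L → u <:+ v → u = v

/-- `NSCle L k`: there is an NFA with at most `k` states accepting `L`
(so the nondeterministic state complexity of `L` is at most `k`). -/
def NSCle {α : Type} (L : Language α) (k : ℕ) : Prop :=
  ∃ (σ : Type) (x : Fintype σ) (M : SNFA α σ), M.accepts = L ∧ @Fintype.card σ x ≤ k

/-- `NSCge L k`: every NFA accepting `L` has at least `k` states
(so the nondeterministic state complexity of `L` is at least `k`). -/
def NSCge {α : Type} (L : Language α) (k : ℕ) : Prop :=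
  ∀ (σ : Type) [Fintype σ] (M : SNFA α σ), M.accepts = L → k ≤ Fintype.card σ

/-- `NSCeq L m`: the nondeterministic state complexity of `L` is exactly `m`:
some NFA with `m` states accepts `L` and every NFA accepting `L` has at least
`m` states. -/
def NSCeq {α : Type} (L : Language α) (m : ℕ) : Prop :=
  NSCle L m ∧ NSCge L m

/-!
The upper bound is the cycle automaton: a start state reading `b` into a cycle of `n - 1`
states counting the `a`s modulo `n - 1`, whose entry point is the only accepting state.
For the lower bound, `(ε, b)` together with the pairs `(b aⁱ, aⁿ⁻¹⁻ⁱ)` for `i < n - 1` form a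
fooling set of size `n`: each pair concatenates to a word of `L₁`, while a mixed concatenation
either has the wrong first letter, contains a second `b`, or has a number of `a`s strictly
between `0` and `2(n - 1)` other than `n - 1`.
-/

namespace SNFA

variable {α σ : Type}

theorem evalFrom_append (M : SNFA α σ) (S : Set σ) (u v : List α) :
    M.evalFrom S (u ++ v) = M.evalFrom (M.evalFrom S u) v :=
  List.foldl_append

theorem mem_accepts {M : SNFA α σ} {w : List α} :
    w ∈ M.accepts ↔ ∃ f ∈ M.accept, f ∈ M.evalFrom {M.start} w :=
  Iff.rfl

theorem evalFrom_cons (M : SNFA α σ) (S : Set σ) (a : α) (w : List α) :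
    M.evalFrom S (a :: w) = M.evalFrom (M.stepSet S a) w :=
  rfl

theorem stepSet_singleton (M : SNFA α σ) (s : σ) (a : α) : M.stepSet {s} a = M.step s a := by
  simp [stepSet]

theorem mem_evalFrom_iff_exists (M : SNFA α σ) (S : Set σ) (w : List α) (q : σ) :
    q ∈ M.evalFrom S w ↔ ∃ s ∈ S, q ∈ M.evalFrom {s} w := by
  induction w generalizing S with
  | nil => simp [evalFrom]
  | cons a w ih =>
    simp only [evalFrom_cons, stepSet_singleton]
    rw [ih]
    simp only [ih (M.step _ a), stepSet, Set.mem_iUnion₂, exists_prop]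
    tauto

theorem mem_evalFrom_singleton_cons (M : SNFA α σ) (s : σ) (a : α) (w : List α) (q : σ) :
    q ∈ M.evalFrom {s} (a :: w) ↔ ∃ p ∈ M.step s a, q ∈ M.evalFrom {p} w := by
  rw [evalFrom_cons, stepSet_singleton, mem_evalFrom_iff_exists]

theorem mem_accepts_append_iff (M : SNFA α σ) (u v : List α) :
    u ++ v ∈ M.accepts ↔
      ∃ q ∈ M.evalFrom {M.start} u, ∃ f ∈ M.accept, f ∈ M.evalFrom {q} v := by
  simp only [mem_accepts, evalFrom_append, mem_evalFrom_iff_exists _ (M.evalFrom _ u)]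
  tauto

end SNFA

/-- An extended fooling set in the sense of Birget. -/
def IsFoolingSet {α ι : Type} (L : Language α) (x y : ι → List α) : Prop :=
  (∀ i, x i ++ y i ∈ L) ∧ ∀ i j, i ≠ j → x i ++ y j ∉ L ∨ x j ++ y i ∉ L

theorem IsFoolingSet.nscGe {α ι : Type} [Fintype ι] {L : Language α} {x y : ι → List α}
    (h : IsFoolingSet L x y) : NSCge L (Fintype.card ι) := by
  intro σ _ M hM
  subst hM
  choose f hf hacc using fun i => (M.mem_accepts_append_iff (x i) (y i)).1 (h.1 i)
  refine Fintype.card_le_of_injective f fun i j hij => ?_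
  by_contra hne
  -- Both mixed words are accepted through the common state `f i = f j`.
  rcases h.2 i j hne with hij' | hji' <;> [apply hij'; apply hji'] <;>
    rw [SNFA.mem_accepts_append_iff]
  · exact ⟨f i, hf i, hij ▸ hacc j⟩
  · exact ⟨f j, hf j, hij ▸ hacc i⟩

open List

/-- The language `b (a^m)*`, with `a = 0` and `b = 1`. -/
def bAPowStar (m : ℕ) : Language (Fin 2) :=
  {w | ∃ k : ℕ, w = 1 :: replicate (k * m) 0}

section bAPowStar

variable {m : ℕ}

theorem mem_bAPowStar_iff {w : List (Fin 2)} :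
    w ∈ bAPowStar m ↔ ∃ t, w = 1 :: t ∧ (∀ a ∈ t, a = 0) ∧ m ∣ t.length := by
  constructor
  · rintro ⟨k, rfl⟩
    exact ⟨_, rfl, fun a ha => (mem_replicate.1 ha).2, by simp⟩
  · rintro ⟨t, rfl, hzero, k, hk⟩
    exact ⟨k, by rw [eq_replicate_of_mem hzero, hk, mul_comm]⟩

theorem one_cons_replicate_mem_bAPowStar_iff {l : ℕ} :
    1 :: replicate l 0 ∈ bAPowStar m ↔ m ∣ l := by
  simp [mem_bAPowStar_iff]

theorem suffixFree_bAPowStar (m : ℕ) : SuffixFree (bAPowStar m) := by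
  rintro u v hu hv ⟨t, rfl⟩
  obtain ⟨u', rfl, -⟩ := mem_bAPowStar_iff.1 hu
  obtain ⟨_, hv, hzero, -⟩ := mem_bAPowStar_iff.1 hv
  cases t with
  | nil => rfl
  | cons a t =>
    have h1 : (1 : Fin 2) = 0 := hzero 1 (by simp [(List.cons.inj hv).2.symm])
    exact absurd h1 (by decide)

open Fin.NatCast

/-- The state `some i` records the number of `a`s read after the initial `b`, modulo `m`. -/
def bAPowStarNFA (m : ℕ) [NeZero m] : SNFA (Fin 2) (Option (Fin m)) where
  step
    | none, a => if a = 1 then {some 0} else ∅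
    | some i, a => if a = 0 then {some (i + 1)} else ∅
  start := none
  accept := {some 0}

variable [NeZero m]

theorem bAPowStarNFA_step_none (a : Fin 2) :
    (bAPowStarNFA m).step none a = if a = 1 then {some 0} else ∅ :=
  rfl

theorem bAPowStarNFA_step_some (i : Fin m) (a : Fin 2) :
    (bAPowStarNFA m).step (some i) a = if a = 0 then {some (i + 1)} else ∅ :=
  rfl

theorem mem_bAPowStarNFA_evalFrom_some_iff (i : Fin m) (w : List (Fin 2)) (q : Option (Fin m)) :
    q ∈ (bAPowStarNFA m).evalFrom {some i} w ↔
      (∀ a ∈ w, a = 0) ∧ q = some (i + (w.length : Fin m)) := by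
  induction w generalizing i with
  | nil => simp [SNFA.evalFrom]
  | cons a w ih =>
    rw [SNFA.mem_evalFrom_singleton_cons, bAPowStarNFA_step_some]
    by_cases ha : a = 0
    · simp [ha, ih, add_assoc, add_comm (1 : Fin m)]
    · simp [ha]

theorem accepts_bAPowStarNFA : (bAPowStarNFA m).accepts = bAPowStar m := by
  ext w
  change (∃ f ∈ ({some 0} : Set _), f ∈ (bAPowStarNFA m).evalFrom {none} w) ↔ _
  simp only [Set.mem_singleton_iff, exists_eq_left, mem_bAPowStar_iff]
  cases w with
  | nil => simp [SNFA.evalFrom]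
  | cons a t =>
    rw [SNFA.mem_evalFrom_singleton_cons, bAPowStarNFA_step_none]
    by_cases ha : a = 1
    · simp [ha, mem_bAPowStarNFA_evalFrom_some_iff, eq_comm, Fin.natCast_eq_zero]
    · simp [ha]

def bAPowStarFoolPrefix (m : ℕ) : Option (Fin m) → List (Fin 2)
  | none => []
  | some i => 1 :: replicate i 0

def bAPowStarFoolSuffix (m : ℕ) : Option (Fin m) → List (Fin 2)
  | none => [1]
  | some i => replicate (m - i) 0

theorem isFoolingSet_bAPowStar :
    IsFoolingSet (bAPowStar m) (bAPowStarFoolPrefix m) (bAPowStarFoolSuffix m) := by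
  refine ⟨?_, fun i j hij => Or.inl ?_⟩
  · rintro (_ | i)
    · exact ⟨0, by simp [bAPowStarFoolPrefix, bAPowStarFoolSuffix]⟩
    · simp [bAPowStarFoolPrefix, bAPowStarFoolSuffix, one_cons_replicate_mem_bAPowStar_iff]
  rw [mem_bAPowStar_iff]
  rintro ⟨t, ht, hzero, hdvd⟩
  rcases i with _ | i <;> rcases j with _ | j
  · exact hij rfl
  · obtain ⟨k, hk⟩ : ∃ k, m - j = k + 1 := ⟨m - j - 1, by omega⟩
    simp [bAPowStarFoolPrefix, bAPowStarFoolSuffix, hk, replicate_succ] at ht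
  · simp only [bAPowStarFoolPrefix, bAPowStarFoolSuffix, cons_append, cons.injEq] at ht
    exact absurd (hzero 1 (by simp [← ht.2])) (by decide)
  · simp only [bAPowStarFoolPrefix, bAPowStarFoolSuffix, cons_append, ← replicate_add,
      cons.injEq, true_and] at ht
    have hij : (i : ℕ) ≠ j := fun h => hij (congrArg some (Fin.ext h))
    have hlen : t.length = i + (m - j) := by simp [← ht]
    have hlen_eq : t.length = m := Nat.eq_of_dvd_of_lt_two_mul (by omega) hdvd (by omega)
    omega

end bAPowStar

/-- For `n ≥ 2`, the language `L₁ = b(a^{n-1})*` (over the alphabet `{a, b}`,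
encoded as `a = 0`, `b = 1` in `Fin 2`) is suffix-free and its nondeterministic
state complexity is exactly `n`. -/
theorem nsc_b_a_pow (n : ℕ) (hn : 2 ≤ n) :
    SuffixFree {w : List (Fin 2) | ∃ k : ℕ, w = 1 :: List.replicate (k * (n - 1)) 0} ∧
    NSCeq {w : List (Fin 2) | ∃ k : ℕ, w = 1 :: List.replicate (k * (n - 1)) 0} n := by
  change SuffixFree (bAPowStar (n - 1)) ∧ NSCeq (bAPowStar (n - 1)) n
  have : NeZero (n - 1) := ⟨by omega⟩
  have hcard : Fintype.card (Option (Fin (n - 1))) = n := by simp; omega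
  refine ⟨suffixFree_bAPowStar _, ⟨_, inferInstance, bAPowStarNFA _, accepts_bAPowStarNFA,
    hcard.le⟩, ?_⟩
  simpa only [hcard] using (isFoolingSet_bAPowStar (m := n - 1)).nscGe
end

section
/- Union upper bound: let L₁ and L₂ be suffix-free regular languages over an alphabet Σ with NSC(L₁) = m and NSC(L₂) = n, where m, n ≥ 2. Then NSC(L₁ ∪ L₂) ≤ m + n − 1, i.e., there is an NFA with at most m + n − 1 states accepting L₁ ∪ L₂. -/
open Computability

/-!
Deleting every transition into the start state of an automaton for a suffix-free language does
not change the language: an accepting run that re-enters the start state proves that a suffix of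
the word is accepted, and by suffix-freeness that suffix is the word itself. Two such
non-returning automata can share their start state, since a run leaves it after the first letter
and never comes back; this union automaton has `m + n - 1` states.
-/

open Function

lemma Set.preimage_image_union_image {σ₁ σ₂ τ : Type*} {f₁ : σ₁ → τ} {f₂ : σ₂ → τ}
    (hf₁ : Injective f₁) {S₁ : Set σ₁} {S₂ : Set σ₂}
    (h : ∀ p q, f₁ p = f₂ q → q ∈ S₂ → p ∈ S₁) :
    f₁ ⁻¹' (f₁ '' S₁ ∪ f₂ '' S₂) = S₁ := by
  rw [Set.preimage_union, hf₁.preimage_image, Set.union_eq_left]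
  rintro p ⟨q, hq, hqp⟩
  exact h p q hqp.symm hq

namespace SNFA

variable {α σ σ₁ σ₂ τ : Type}

section evalFrom

variable (M : SNFA α σ)

@[simp]
lemma evalFrom_nil (S : Set σ) : M.evalFrom S [] = S := rfl

lemma evalFrom_append_singleton (S : Set σ) (w : List α) (a : α) :
    M.evalFrom S (w ++ [a]) = M.stepSet (M.evalFrom S w) a := by
  simp [evalFrom]

lemma stepSet_mono {S T : Set σ} (h : S ⊆ T) (a : α) : M.stepSet S a ⊆ M.stepSet T a :=
  Set.biUnion_subset_biUnion_left h

lemma evalFrom_mono {S T : Set σ} (h : S ⊆ T) (w : List α) :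
    M.evalFrom S w ⊆ M.evalFrom T w := by
  induction w generalizing S T with
  | nil => exact h
  | cons a w ih => exact ih (M.stepSet_mono h a)

end evalFrom

def IsNonreturning (M : SNFA α σ) : Prop :=
  ∀ p a, M.start ∉ M.step p a

lemma IsNonreturning.start_notMem_evalFrom {M : SNFA α σ} (hM : M.IsNonreturning)
    (S : Set σ) {w : List α} (hw : w ≠ []) : M.start ∉ M.evalFrom S w := by
  induction w using List.reverseRecOn with
  | nil => exact absurd rfl hw
  | append_singleton w a _ =>
    rw [evalFrom_append_singleton]
    simpa [stepSet] using fun p _ => hM p a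

lemma IsNonreturning.start_mem_evalFrom_iff {M : SNFA α σ} (hM : M.IsNonreturning)
    (w : List α) : M.start ∈ M.evalFrom {M.start} w ↔ w = [] := by
  refine ⟨fun h => ?_, fun h => by simp [h]⟩
  by_contra hw
  exact hM.start_notMem_evalFrom _ hw h

def prune (M : SNFA α σ) : SNFA α σ where
  step p a := M.step p a \ {M.start}
  start := M.start
  accept := M.accept

lemma isNonreturning_prune (M : SNFA α σ) : M.prune.IsNonreturning :=
  fun _ _ h => h.2 rfl

lemma prune_evalFrom_subset (M : SNFA α σ) (S : Set σ) (w : List α) :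
    M.prune.evalFrom S w ⊆ M.evalFrom S w := by
  induction w generalizing S with
  | nil => exact subset_rfl
  | cons a w ih =>
    have hstep : M.prune.stepSet S a ⊆ M.stepSet S a :=
      Set.biUnion_mono subset_rfl fun _ _ => Set.sdiff_subset
    exact (ih _).trans (M.evalFrom_mono hstep w)

lemma evalFrom_subset_iUnion_prune_evalFrom (M : SNFA α σ) (w : List α) :
    M.evalFrom {M.start} w ⊆ ⋃ v ∈ {v | v <:+ w}, M.prune.evalFrom {M.start} v := by
  induction w using List.reverseRecOn with
  | nil => exact fun x hx => Set.mem_iUnion₂.mpr ⟨[], List.nil_suffix, hx⟩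
  | append_singleton w a ih =>
    intro x hx
    simp only [evalFrom_append_singleton, stepSet, Set.mem_iUnion] at hx ⊢
    obtain ⟨s, hs, hx⟩ := hx
    obtain ⟨v, hv, hsv⟩ := Set.mem_iUnion₂.mp (ih hs)
    by_cases hxs : x = M.start
    · exact ⟨[], List.nil_suffix, by simp [hxs, prune]⟩
    · refine ⟨v ++ [a], List.suffix_append_self_iff.mpr hv, ?_⟩
      simp only [evalFrom_append_singleton, stepSet, Set.mem_iUnion]
      exact ⟨s, hsv, hx, hxs⟩

lemma accepts_prune {M : SNFA α σ} (h : SuffixFree M.accepts) :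
    M.prune.accepts = M.accepts := by
  ext w
  refine ⟨fun ⟨q, hq, hqw⟩ => ⟨q, hq, M.prune_evalFrom_subset _ w hqw⟩, fun hw => ?_⟩
  obtain ⟨q, hq, hqw⟩ := hw
  obtain ⟨v, hvw, hqv⟩ := Set.mem_iUnion₂.mp (M.evalFrom_subset_iUnion_prune_evalFrom w hqw)
  obtain rfl : v = w := h v w ⟨q, hq, M.prune_evalFrom_subset _ v hqv⟩ ⟨q, hq, hqw⟩ hvw
  exact ⟨q, hq, hqv⟩

section glue

variable (f₁ : σ₁ → τ) (f₂ : σ₂ → τ) (M₁ : SNFA α σ₁) (M₂ : SNFA α σ₂)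

/-- When `f₁` and `f₂` are injective and their images meet only in `f₁ M₁.start = f₂ M₂.start`,
this is the union of `M₁` and `M₂` with the two start states merged. -/
def glue : SNFA α τ where
  step x a := f₁ '' M₁.stepSet (f₁ ⁻¹' {x}) a ∪ f₂ '' M₂.stepSet (f₂ ⁻¹' {x}) a
  start := f₁ M₁.start
  accept := f₁ '' M₁.accept ∪ f₂ '' M₂.accept

lemma glue_stepSet (T : Set τ) (a : α) :
    (glue f₁ f₂ M₁ M₂).stepSet T a =
      f₁ '' M₁.stepSet (f₁ ⁻¹' T) a ∪ f₂ '' M₂.stepSet (f₂ ⁻¹' T) a := by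
  ext x
  simp only [stepSet, glue, Set.mem_iUnion, Set.mem_union, Set.mem_image, Set.mem_preimage,
    Set.mem_singleton_iff, exists_prop]
  aesop

variable {f₁ f₂ M₁ M₂}

lemma preimage_left_image_union_evalFrom (hf₁ : Injective f₁)
    (hglue : ∀ p q, f₁ p = f₂ q ↔ p = M₁.start ∧ q = M₂.start)
    (h₁ : M₁.IsNonreturning) (h₂ : M₂.IsNonreturning) (w : List α) :
    f₁ ⁻¹' (f₁ '' M₁.evalFrom {M₁.start} w ∪ f₂ '' M₂.evalFrom {M₂.start} w) =
      M₁.evalFrom {M₁.start} w := by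
  refine Set.preimage_image_union_image hf₁ fun p q hpq hq => ?_
  obtain ⟨rfl, rfl⟩ := (hglue p q).1 hpq
  rwa [h₁.start_mem_evalFrom_iff, ← h₂.start_mem_evalFrom_iff]

lemma preimage_right_image_union_evalFrom (hf₂ : Injective f₂)
    (hglue : ∀ p q, f₁ p = f₂ q ↔ p = M₁.start ∧ q = M₂.start)
    (h₁ : M₁.IsNonreturning) (h₂ : M₂.IsNonreturning) (w : List α) :
    f₂ ⁻¹' (f₁ '' M₁.evalFrom {M₁.start} w ∪ f₂ '' M₂.evalFrom {M₂.start} w) =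
      M₂.evalFrom {M₂.start} w := by
  rw [Set.union_comm]
  refine Set.preimage_image_union_image hf₂ fun q p hqp hp => ?_
  obtain ⟨rfl, rfl⟩ := (hglue p q).1 hqp.symm
  rwa [h₂.start_mem_evalFrom_iff, ← h₁.start_mem_evalFrom_iff]

lemma evalFrom_glue (hf₁ : Injective f₁) (hf₂ : Injective f₂)
    (hglue : ∀ p q, f₁ p = f₂ q ↔ p = M₁.start ∧ q = M₂.start)
    (h₁ : M₁.IsNonreturning) (h₂ : M₂.IsNonreturning) (w : List α) :
    (glue f₁ f₂ M₁ M₂).evalFrom {f₁ M₁.start} w =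
      f₁ '' M₁.evalFrom {M₁.start} w ∪ f₂ '' M₂.evalFrom {M₂.start} w := by
  induction w using List.reverseRecOn with
  | nil => simp [(hglue _ _).2 ⟨rfl, rfl⟩]
  | append_singleton w a ih =>
    simp only [evalFrom_append_singleton, ih, glue_stepSet,
      preimage_left_image_union_evalFrom hf₁ hglue h₁ h₂,
      preimage_right_image_union_evalFrom hf₂ hglue h₁ h₂]

lemma accepts_glue (hf₁ : Injective f₁) (hf₂ : Injective f₂)
    (hglue : ∀ p q, f₁ p = f₂ q ↔ p = M₁.start ∧ q = M₂.start)
    (h₁ : M₁.IsNonreturning) (h₂ : M₂.IsNonreturning) :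
    (glue f₁ f₂ M₁ M₂).accepts = M₁.accepts ⊔ M₂.accepts := by
  ext w
  change (∃ x ∈ f₁ '' M₁.accept ∪ f₂ '' M₂.accept,
    x ∈ (glue f₁ f₂ M₁ M₂).evalFrom {f₁ M₁.start} w) ↔ w ∈ M₁.accepts ∨ w ∈ M₂.accepts
  simp only [Set.mem_union, or_and_right, exists_or, Set.exists_mem_image, ← Set.mem_preimage]
  rw [evalFrom_glue hf₁ hf₂ hglue h₁ h₂, preimage_left_image_union_evalFrom hf₁ hglue h₁ h₂,
    preimage_right_image_union_evalFrom hf₂ hglue h₁ h₂]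
  rfl

end glue

end SNFA

def Sum.glueAt {σ₁ σ₂ : Type} [DecidableEq σ₂] (s₁ : σ₁) (s₂ : σ₂) (q : σ₂) :
    σ₁ ⊕ {q // q ≠ s₂} :=
  if h : q = s₂ then .inl s₁ else .inr ⟨q, h⟩

lemma Sum.glueAt_injective {σ₁ σ₂ : Type} [DecidableEq σ₂] (s₁ : σ₁) (s₂ : σ₂) :
    Function.Injective (Sum.glueAt s₁ s₂) := by
  intro q q' h
  unfold Sum.glueAt at h
  split_ifs at h <;> simp_all

lemma Sum.inl_eq_glueAt_iff {σ₁ σ₂ : Type} [DecidableEq σ₂] {s₁ : σ₁} {s₂ : σ₂} {p : σ₁}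
    {q : σ₂} : Sum.inl p = Sum.glueAt s₁ s₂ q ↔ p = s₁ ∧ q = s₂ := by
  unfold Sum.glueAt
  split_ifs <;> simp_all [eq_comm]

lemma NSCle.mono {α : Type} {L : Language α} {k k' : ℕ} (h : NSCle L k) (hk : k ≤ k') :
    NSCle L k' :=
  let ⟨σ, x, M, hM, hc⟩ := h
  ⟨σ, x, M, hM, hc.trans hk⟩

lemma NSCle.exists_isNonreturning {α : Type} {L : Language α} {k : ℕ} (h : NSCle L k)
    (hL : SuffixFree L) :
    ∃ (σ : Type) (_ : Fintype σ) (M : SNFA α σ),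
      M.IsNonreturning ∧ M.accepts = L ∧ Fintype.card σ ≤ k := by
  obtain ⟨σ, _, M, rfl, hk⟩ := h
  exact ⟨σ, _, M.prune, M.isNonreturning_prune, SNFA.accepts_prune hL, hk⟩

lemma SNFA.nscle_accepts_sup {α σ₁ σ₂ : Type} [Fintype σ₁] [Fintype σ₂] {M₁ : SNFA α σ₁}
    {M₂ : SNFA α σ₂} (h₁ : M₁.IsNonreturning) (h₂ : M₂.IsNonreturning) :
    NSCle (M₁.accepts ⊔ M₂.accepts) (Fintype.card σ₁ + Fintype.card σ₂ - 1) := by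
  classical
  refine ⟨σ₁ ⊕ {q // q ≠ M₂.start}, inferInstance,
    glue Sum.inl (Sum.glueAt M₁.start M₂.start) M₁ M₂,
    accepts_glue Sum.inl_injective (Sum.glueAt_injective _ _)
      (fun _ _ => Sum.inl_eq_glueAt_iff) h₁ h₂, ?_⟩
  have : 0 < Fintype.card σ₂ := Fintype.card_pos_iff.2 ⟨M₂.start⟩
  simp only [Fintype.card_sum, Fintype.card_subtype_compl, Fintype.card_unique]
  omega

theorem union_upper_general {α : Type} (L₁ L₂ : Language α) (m n : ℕ)
    (hsf₁ : SuffixFree L₁) (hsf₂ : SuffixFree L₂)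
    (hm : NSCeq L₁ m) (hn : NSCeq L₂ n) :
    NSCle (L₁ ⊔ L₂) (m + n - 1) := by
  obtain ⟨σ₁, _, M₁, h₁, rfl, hc₁⟩ := hm.1.exists_isNonreturning hsf₁
  obtain ⟨σ₂, _, M₂, h₂, rfl, hc₂⟩ := hn.1.exists_isNonreturning hsf₂
  exact (SNFA.nscle_accepts_sup h₁ h₂).mono (by omega)

/-- **Union, upper bound.** If `L₁` and `L₂` are suffix-free regular languages
with nondeterministic state complexities `m, n ≥ 2`, then some NFA with at most
`m + n - 1` states accepts `L₁ ∪ L₂`. -/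
theorem union_upper {α : Type} (L₁ L₂ : Language α) (m n : ℕ)
    (hsf₁ : SuffixFree L₁) (hsf₂ : SuffixFree L₂)
    (hm : NSCeq L₁ m) (hn : NSCeq L₂ n) (hm2 : 2 ≤ m) (hn2 : 2 ≤ n) :
    NSCle (L₁ ⊔ L₂) (m + n - 1) :=
  union_upper_general L₁ L₂ m n hsf₁ hsf₂ hm hn
end

section
/- Union lower bound witness: let m, n ≥ 2 and, over the alphabet {a,b}, let L₁ = { b a^{k(m-1)} : k ≥ 0 } and L₂ = { a b^{k(n-1)} : k ≥ 0 }. Then L₁ and L₂ are suffix-free, NSC(L₁) = m, NSC(L₂) = n, and NSC(L₁ ∪ L₂) = m + n − 1. -/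
open Computability

/-!
The upper bounds come from one construction: a fresh start state which, on the head letter of a
language `c (c'^d)*`, enters a cycle of length `d` on the letter `c'` whose origin is the only
accepting state. For `b (a^{m-1})* ∪ a (b^{n-1})*` both cycles hang off the same start state,
giving `1 + (m - 1) + (n - 1)` states.

The lower bounds are fooling sets. For `c (c'^d)*` take the pairs `(ε, c c'^d)` and
`(c c'^i, c'^{d-i})` for `i < d`; for the union add the pairs `(c' c^j, c^{e-j})`, `j < e`, of the
second language. Two pairs of the same language cross to `c c'^{i+d-j}`, which lies in the language
only if `d ∣ i + d - j`, that is `i = j`; every other crossing has a letter out of place.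
-/

namespace NFA

variable {α σ τ : Type} (M : NFA α σ)

@[simp]
theorem evalFrom_empty (x : List α) : M.evalFrom ∅ x = ∅ := by
  simpa using M.evalFrom_iUnion (ι := Empty) (fun _ => ∅) x

theorem mem_acceptsFrom_iff_exists {S : Set σ} {x : List α} :
    x ∈ M.acceptsFrom S ↔ ∃ s ∈ S, x ∈ M.acceptsFrom {s} := by
  simp only [mem_acceptsFrom, mem_evalFrom_iff_exists (S := S)]
  grind

theorem evalFrom_image (N : NFA α τ) (f : σ → τ) (hstep : ∀ s a, N.step (f s) a = f '' M.step s a)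
    (S : Set σ) (x : List α) : N.evalFrom (f '' S) x = f '' M.evalFrom S x := by
  induction x generalizing S with
  | nil => rfl
  | cons a x ih =>
    rw [evalFrom_cons, evalFrom_cons, ← ih]
    congr 1
    simp [stepSet, Set.image_iUnion₂, hstep]

theorem acceptsFrom_image (N : NFA α τ) (f : σ → τ)
    (hstep : ∀ s a, N.step (f s) a = f '' M.step s a) (haccept : f ⁻¹' N.accept = M.accept)
    (S : Set σ) : N.acceptsFrom (f '' S) = M.acceptsFrom S := by
  ext x
  simp [mem_acceptsFrom, M.evalFrom_image N f hstep, ← haccept]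

end NFA

theorem Language.mem_sup {α : Type} {l m : Language α} {x : List α} :
    x ∈ l ⊔ m ↔ x ∈ l ∨ x ∈ m :=
  Iff.rfl

theorem List.exists_eq_replicate_mul_iff {α : Type} {d : ℕ} {c : α} {w : List α} :
    (∃ k, w = List.replicate (k * d) c) ↔ (∀ b ∈ w, b = c) ∧ d ∣ w.length := by
  rw [← List.eq_replicate_length]
  constructor
  · rintro ⟨k, rfl⟩
    simp
  · rintro ⟨hw, k, hk⟩
    exact ⟨k, by rw [hw, hk, mul_comm]⟩

theorem Nat.dvd_add_sub_iff_eq {d i j : ℕ} (hi : i < d) (hj : j < d) :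
    d ∣ i + (d - j) ↔ i = j := by
  refine ⟨fun h => ?_, by rintro rfl; simp [Nat.add_sub_cancel' hi.le]⟩
  have := Nat.eq_of_dvd_of_lt_two_mul (by omega) h (by omega)
  omega

namespace SNFA

variable {α : Type}

@[simps]
def toNFA {σ : Type} (M : SNFA α σ) : NFA α σ := ⟨M.step, {M.start}, M.accept⟩

theorem accepts_eq_acceptsFrom {σ : Type} (M : SNFA α σ) :
    M.accepts = M.toNFA.acceptsFrom {M.start} :=
  rfl

@[simps]
def cycle [DecidableEq α] (d : ℕ) (c : α) : SNFA α (ZMod d) where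
  step z a := if a = c then {z + 1} else ∅
  start := 0
  accept := {0}

theorem mem_cycle_acceptsFrom [DecidableEq α] {d : ℕ} {c : α} {z : ZMod d} {w : List α} :
    w ∈ (cycle d c).toNFA.acceptsFrom {z} ↔ (∀ a ∈ w, a = c) ∧ z + w.length = 0 := by
  induction w generalizing z with
  | nil => simp
  | cons a w ih =>
    by_cases ha : a = c
    · simp [ha, ih, add_assoc, add_comm (1 : ZMod d)]
    · simp [ha, NFA.mem_acceptsFrom]

theorem mem_cycle_accepts [DecidableEq α] {d : ℕ} {c : α} {w : List α} :
    w ∈ (cycle d c).accepts ↔ ∃ k, w = List.replicate (k * d) c := by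
  rw [accepts_eq_acceptsFrom, mem_cycle_acceptsFrom, cycle_start, zero_add,
    ZMod.natCast_eq_zero_iff, List.exists_eq_replicate_mul_iff]

variable {ι : Type} {σ : ι → Type}

@[simps]
def branch (h : ι → α) (M : ∀ i, SNFA α (σ i)) : SNFA α (Option (Σ i, σ i)) where
  step q a := q.elim {q | ∃ i, h i = a ∧ q = some ⟨i, (M i).start⟩}
    fun p => (fun t => some ⟨p.1, t⟩) '' (M p.1).step p.2 a
  start := none
  accept := {q | q.elim False fun p => p.2 ∈ (M p.1).accept}

theorem mem_branch_accepts {h : ι → α} {M : ∀ i, SNFA α (σ i)} {w : List α} :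
    w ∈ (branch h M).accepts ↔ ∃ i, ∃ v ∈ (M i).accepts, w = h i :: v := by
  have hcopy (i : ι) (s : σ i) :
      (branch h M).toNFA.acceptsFrom {some ⟨i, s⟩} = (M i).toNFA.acceptsFrom {s} := by
    simpa using NFA.acceptsFrom_image (M i).toNFA (branch h M).toNFA (fun t => some ⟨i, t⟩)
      (fun _ _ => rfl) rfl {s}
  rcases w with _ | ⟨a, v⟩
  · simp [accepts_eq_acceptsFrom]
  · rw [accepts_eq_acceptsFrom, NFA.cons_mem_acceptsFrom, NFA.mem_acceptsFrom_iff_exists]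
    simp [hcopy, accepts_eq_acceptsFrom, eq_comm (a := a), and_comm]

end SNFA

theorem NSCge_of_fooling {α ι : Type} [Fintype ι] {L : Language α} (x y : ι → List α)
    (hmem : ∀ i, x i ++ y i ∈ L) (hcross : ∀ i j, x i ++ y j ∈ L → x j ++ y i ∈ L → i = j) :
    NSCge L (Fintype.card ι) := by
  rintro σ _ M rfl
  simp only [SNFA.accepts_eq_acceptsFrom, NFA.append_mem_acceptsFrom] at hmem hcross
  choose p hpx hpy using fun i => M.toNFA.mem_acceptsFrom_iff_exists.mp (hmem i)
  have hglue (i j : ι) (hij : p i = p j) :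
      y j ∈ M.toNFA.acceptsFrom (M.toNFA.evalFrom {M.start} (x i)) :=
    M.toNFA.mem_acceptsFrom_iff_exists.mpr ⟨p i, hpx i, hij ▸ hpy j⟩
  exact Fintype.card_le_of_injective p fun i j hij =>
    hcross i j (hglue i j hij) (hglue j i hij.symm)

section ChainLang

variable {α : Type}

/-- The language `c (c'^d)*`. -/
def chainLang (d : ℕ) (c c' : α) : Language α :=
  {w | ∃ k, w = c :: List.replicate (k * d) c'}

theorem mem_chainLang {d : ℕ} {c c' : α} {w : List α} :
    w ∈ chainLang d c c' ↔ ∃ k, w = c :: List.replicate (k * d) c' :=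
  Iff.rfl

theorem cons_mem_chainLang {d : ℕ} {c c' a : α} {w : List α} :
    a :: w ∈ chainLang d c c' ↔ a = c ∧ (∀ b ∈ w, b = c') ∧ d ∣ w.length := by
  simp only [mem_chainLang, List.cons.injEq, exists_and_left, List.exists_eq_replicate_mul_iff]

theorem chainLang_suffixFree {d : ℕ} {c c' : α} (hc : c ≠ c') :
    SuffixFree (chainLang d c c') := by
  rintro u v ⟨k, rfl⟩ ⟨l, rfl⟩ ⟨_ | ⟨a, p⟩, hp⟩
  · simpa using hp
  · simp only [List.cons_append, List.cons.injEq] at hp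
    have hmem : c ∈ List.replicate (l * d) c' := hp.2 ▸ by simp
    exact (hc (List.eq_of_mem_replicate hmem)).elim

theorem NSCle_iSup_chainLang {ι : Type} [Fintype ι] [DecidableEq α] (h : ι → α) (d : ι → ℕ)
    [∀ i, NeZero (d i)] (c : ι → α) :
    NSCle (⨆ i, chainLang (d i) (h i) (c i)) (∑ i, d i + 1) := by
  refine ⟨_, inferInstance, SNFA.branch h fun i => SNFA.cycle (d i) (c i), ?_, by simp⟩
  ext w
  rw [SNFA.mem_branch_accepts, Language.mem_iSup]
  simp [SNFA.mem_cycle_accepts, mem_chainLang]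

theorem NSCge_chainLang {d : ℕ} {c c' : α} (hc : c ≠ c') :
    NSCge (chainLang d c c') (d + 1) := by
  let x : Option (Fin d) → List α := fun i => i.elim [] fun i => c :: List.replicate i c'
  let y : Option (Fin d) → List α := fun i =>
    i.elim (c :: List.replicate d c') fun i => List.replicate (d - i) c'
  convert NSCge_of_fooling x y ?_ ?_ using 1
  · simp
  · rintro (_ | i) <;> simp [x, y, cons_mem_chainLang]
  · rintro (_ | i) (_ | j) h₁ h₂ <;>
      simp only [x, y, Option.elim, List.nil_append, List.cons_append, cons_mem_chainLang,
        List.forall_mem_append, List.forall_mem_cons, List.forall_mem_replicate, hc,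
        List.length_append, List.length_replicate] at h₁ h₂ ⊢
    all_goals simp_all [Nat.dvd_add_sub_iff_eq, Fin.val_inj]

theorem NSCge_chainLang_sup {d e : ℕ} (hd : 0 < d) {c c' : α} (hc : c ≠ c') :
    NSCge (chainLang d c c' ⊔ chainLang e c' c) (d + e + 1) := by
  let x : Option (Fin d ⊕ Fin e) → List α := fun i => i.elim []
    (Sum.elim (fun i => c :: List.replicate i c') (fun j => c' :: List.replicate j c))
  let y : Option (Fin d ⊕ Fin e) → List α := fun i => i.elim (c :: List.replicate d c')
    (Sum.elim (fun i => List.replicate (d - i) c') (fun j => List.replicate (e - j) c))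
  convert NSCge_of_fooling x y ?_ ?_ using 1
  · simp
  · rintro (_ | i | j) <;> simp [x, y, cons_mem_chainLang, Language.mem_sup]
  · rintro (_ | i | j) (_ | i' | j') h₁ h₂ <;>
      simp only [x, y, Option.elim, Sum.elim, List.nil_append, List.cons_append,
        cons_mem_chainLang, List.forall_mem_append, List.forall_mem_cons,
        List.forall_mem_replicate, hc, hc.symm, Language.mem_sup, List.length_append,
        List.length_replicate] at h₁ h₂ ⊢
    all_goals simp_all [Nat.dvd_add_sub_iff_eq, Fin.val_inj]
    all_goals omega

theorem NSCeq_chainLang [DecidableEq α] {d : ℕ} (hd : 0 < d) {c c' : α} (hc : c ≠ c') :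
    NSCeq (chainLang d c c') (d + 1) := by
  have : NeZero d := NeZero.of_pos hd
  refine ⟨?_, NSCge_chainLang hc⟩
  simpa using NSCle_iSup_chainLang (ι := Unit) (fun _ => c) (fun _ => d) (fun _ => c')

theorem NSCeq_chainLang_sup [DecidableEq α] {d e : ℕ} (hd : 0 < d) (he : 0 < e) {c c' : α}
    (hc : c ≠ c') : NSCeq (chainLang d c c' ⊔ chainLang e c' c) (d + e + 1) := by
  have (b : Bool) : NeZero (cond b d e) := NeZero.of_pos (by cases b <;> assumption)
  refine ⟨?_, NSCge_chainLang_sup hd hc⟩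
  simpa [iSup_bool_eq] using
    NSCle_iSup_chainLang (fun b => cond b c c') (fun b => cond b d e) (fun b => cond b c' c)

end ChainLang

/-- **Union, lower bound witness.** For `m, n ≥ 2`, the suffix-free languages
`L₁ = b(a^{m-1})*` and `L₂ = a(b^{n-1})*` (over `{a, b}`, encoded as `a = 0`,
`b = 1` in `Fin 2`) satisfy `NSC(L₁) = m`, `NSC(L₂) = n` and
`NSC(L₁ ∪ L₂) = m + n - 1`. -/
theorem union_lower_witness (m n : ℕ) (hm : 2 ≤ m) (hn : 2 ≤ n) :
    SuffixFree {w : List (Fin 2) | ∃ k : ℕ, w = 1 :: List.replicate (k * (m - 1)) 0} ∧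
    SuffixFree {w : List (Fin 2) | ∃ k : ℕ, w = 0 :: List.replicate (k * (n - 1)) 1} ∧
    NSCeq {w : List (Fin 2) | ∃ k : ℕ, w = 1 :: List.replicate (k * (m - 1)) 0} m ∧
    NSCeq {w : List (Fin 2) | ∃ k : ℕ, w = 0 :: List.replicate (k * (n - 1)) 1} n ∧
    NSCeq ({w : List (Fin 2) | ∃ k : ℕ, w = 1 :: List.replicate (k * (m - 1)) 0} ⊔
           {w : List (Fin 2) | ∃ k : ℕ, w = 0 :: List.replicate (k * (n - 1)) 1})
      (m + n - 1) := by
  have hba : (1 : Fin 2) ≠ 0 := by decide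
  have h₁ := NSCeq_chainLang (d := m - 1) (by omega) hba
  have h₂ := NSCeq_chainLang (d := n - 1) (by omega) hba.symm
  have h₁₂ := NSCeq_chainLang_sup (d := m - 1) (e := n - 1) (by omega) (by omega) hba
  rw [Nat.sub_add_cancel (by omega)] at h₁ h₂
  rw [show m - 1 + (n - 1) + 1 = m + n - 1 by omega] at h₁₂
  exact ⟨chainLang_suffixFree hba, chainLang_suffixFree hba.symm, h₁, h₂, h₁₂⟩
end
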